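/- arXiv:2311.09631 — 2 statements merged into one kernel-verified Lean document; each statement's English description precedes it below -/
import Mathlib

section
/- Let ℰ be a ℂ-linear map from (n+a)-qubit matrices to 1-qubit (2×2) matrices (for instance, a quantum channel), and define ℰ' on n-qubit matrices by ℰ'(ρ) = ℰ(ρ ⊗ |0^a⟩⟨0^a|), where |0^a⟩ is the all-zeros computational basis state on a qubits. Then for every k ∈ {0, 1, …, n+1}, the Pauli weights of the Choi representations satisfy W^{>k}[Φ_{ℰ'}] ≤ 2^a · W^{>k}[Φ_ℰ], where the weight of Φ_{ℰ'} is over (n+1)-qubit Paulis and the weight of Φ_ℰ is over (n+a+1)-qubit Paulis. -/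
open scoped BigOperators ComplexOrder

noncomputable section

/-- The four 1-qubit Pauli matrices, indexed by `Fin 4` (`0 = I`, `1 = X`, `2 = Y`, `3 = Z`). -/
def pauliMat (q : Fin 4) : Matrix Bool Bool ℂ := fun b b' =>
  if q = 0 then (if b = b' then 1 else 0)
  else if q = 1 then (if b = b' then 0 else 1)
  else if q = 2 then
    (if b then (if b' then 0 else Complex.I) else (if b' then -Complex.I else 0))
  else (if b = b' then (if b then -1 else 1) else 0)

/-- An `m`-qubit Pauli tensor `P = P_1 ⊗ … ⊗ P_m`. -/
def pauliTensor {m : ℕ} (p : Fin m → Fin 4) :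
    Matrix (Fin m → Bool) (Fin m → Bool) ℂ :=
  Matrix.of fun x y => ∏ i, pauliMat (p i) (x i) (y i)

/-- The degree `|P|` of a Pauli: the number of non-identity tensor factors. -/
def pauliDeg {m : ℕ} (p : Fin m → Fin 4) : ℕ :=
  (Finset.univ.filter fun i => p i ≠ 0).card

/-- The Pauli coefficient `Â(P) = 2^{-m} · tr(P·A)`. -/
def pauliCoeff {m : ℕ} (A : Matrix (Fin m → Bool) (Fin m → Bool) ℂ)
    (p : Fin m → Fin 4) : ℂ :=
  ((2 : ℂ) ^ m)⁻¹ * (pauliTensor p * A).trace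

/-- The Pauli weight of `A` above degree `k`: `W^{>k}[A] = Σ_{|P|>k} |Â(P)|²`. -/
def weightAbove {m : ℕ} (k : ℕ) (A : Matrix (Fin m → Bool) (Fin m → Bool) ℂ) : ℝ :=
  ∑ p : Fin m → Fin 4,
    if k < pauliDeg p then ‖pauliCoeff A p‖ ^ 2 else 0

/-- The Pauli weight of `A` at degree exactly `k`. -/
def weightEq {m : ℕ} (k : ℕ) (A : Matrix (Fin m → Bool) (Fin m → Bool) ℂ) : ℝ :=
  ∑ p : Fin m → Fin 4,
    if pauliDeg p = k then ‖pauliCoeff A p‖ ^ 2 else 0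

/-- The squared Frobenius norm `‖A‖_F² = tr(A†A) = Σ |A x y|²`. -/
def frobSq {α : Type*} [Fintype α] (A : Matrix α α ℂ) : ℝ :=
  ∑ x, ∑ y, ‖A x y‖ ^ 2

/-- A matrix is unitary. -/
def IsUnitaryM {α : Type*} [Fintype α] [DecidableEq α] (U : Matrix α α ℂ) : Prop :=
  U * U.conjTranspose = 1 ∧ U.conjTranspose * U = 1

/-- Trace out all qubits except the last one of an `m`-qubit matrix. -/
def chanLast : {m : ℕ} → Matrix (Fin m → Bool) (Fin m → Bool) ℂ → Matrix Bool Bool ℂ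
  | 0, _ => 0
  | _ + 1, M => Matrix.of fun b b' =>
      ∑ z, M (Fin.snoc z b) (Fin.snoc z b')

/-- The Choi representation of a map from `n`-qubit matrices to `1`-qubit matrices:
`Φ_ℰ((x,b),(x',b')) = ℰ(|x⟩⟨x'|)(b,b')`. -/
def choiOfChannel {n : ℕ}
    (E : Matrix (Fin n → Bool) (Fin n → Bool) ℂ → Matrix Bool Bool ℂ) :
    Matrix (Fin (n + 1) → Bool) (Fin (n + 1) → Bool) ℂ :=
  Matrix.of fun w w' =>
    E (Matrix.single (fun i : Fin n => w i.castSucc)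
        (fun i : Fin n => w' i.castSucc) 1)
      (w (Fin.last n)) (w' (Fin.last n))

/-- The tensor product `ρ ⊗ ψ` of an `n`-qubit matrix and an `a`-qubit matrix. -/
def tensorNA {n a : ℕ} (ρ : Matrix (Fin n → Bool) (Fin n → Bool) ℂ)
    (ψ : Matrix (Fin a → Bool) (Fin a → Bool) ℂ) :
    Matrix (Fin (n + a) → Bool) (Fin (n + a) → Bool) ℂ :=
  Matrix.of fun x y =>
    ρ (fun i => x (Fin.castAdd a i)) (fun i => y (Fin.castAdd a i)) *
      ψ (fun j => x (Fin.natAdd n j)) (fun j => y (Fin.natAdd n j))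

/-- The channel `ℰ_U : ρ ↦ tr_{all but last qubit}(UρU†)`. -/
def chanU {m : ℕ} (U : Matrix (Fin m → Bool) (Fin m → Bool) ℂ)
    (ρ : Matrix (Fin m → Bool) (Fin m → Bool) ℂ) : Matrix Bool Bool ℂ :=
  chanLast (U * ρ * U.conjTranspose)

/-- The Choi representation `Φ_U` of `ℰ_U`. -/
def choiU {n : ℕ} (U : Matrix (Fin n → Bool) (Fin n → Bool) ℂ) :
    Matrix (Fin (n + 1) → Bool) (Fin (n + 1) → Bool) ℂ :=
  choiOfChannel (chanU U)

/-- The channel `ℰ_{C,ψ} : ρ ↦ tr_{all but last qubit}(C(ρ⊗ψ)C†)`. -/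
def chanAux {n a : ℕ} (C : Matrix (Fin (n + a) → Bool) (Fin (n + a) → Bool) ℂ)
    (ψ : Matrix (Fin a → Bool) (Fin a → Bool) ℂ)
    (ρ : Matrix (Fin n → Bool) (Fin n → Bool) ℂ) : Matrix Bool Bool ℂ :=
  chanLast (C * tensorNA ρ ψ * C.conjTranspose)

/-- The Choi representation `Φ_{C,ψ}` of `ℰ_{C,ψ}`. -/
def choiAux {n a : ℕ} (C : Matrix (Fin (n + a) → Bool) (Fin (n + a) → Bool) ℂ)
    (ψ : Matrix (Fin a → Bool) (Fin a → Bool) ℂ) :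
    Matrix (Fin (n + 1) → Bool) (Fin (n + 1) → Bool) ℂ :=
  choiOfChannel (chanAux C ψ)

/-- The CZ gate on a subset `S` of the qubits. -/
def czGate {n : ℕ} (S : Finset (Fin n)) :
    Matrix (Fin n → Bool) (Fin n → Bool) ℂ :=
  Matrix.of fun x y =>
    if x = y then (if ∀ i ∈ S, x i = true then -1 else 1) else 0

/-- A layer of CZ gates on a family `G` of (disjoint) subsets of the qubits. -/
def czLayer {n : ℕ} (G : Finset (Finset (Fin n))) :
    Matrix (Fin n → Bool) (Fin n → Bool) ℂ :=
  Matrix.of fun x y =>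
    if x = y then ∏ S ∈ G, (if ∀ i ∈ S, x i = true then (-1 : ℂ) else 1) else 0

/-- A layer of single-qubit gates. -/
def IsLayer {n : ℕ} (L : Matrix (Fin n → Bool) (Fin n → Bool) ℂ) : Prop :=
  ∃ u : Fin n → Matrix Bool Bool ℂ,
    (∀ i, IsUnitaryM (u i)) ∧ ∀ x y, L x y = ∏ i, u i (x i) (y i)

/-- A depth-`d` QAC circuit on `n` qubits: `C = L_0 · M_1 · L_1 ⋯ M_d · L_d` where each `L_i`
is a layer of single-qubit gates and each `M_j` is a product of CZ gates on pairwise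
disjoint nonempty subsets of the qubits. -/
structure QACCircuit (n d : ℕ) where
  L : Fin (d + 1) → Matrix (Fin n → Bool) (Fin n → Bool) ℂ
  G : Fin d → Finset (Finset (Fin n))
  layers : ∀ i, IsLayer (L i)
  gates_nonempty : ∀ j, ∀ S ∈ G j, S.Nonempty
  gates_disjoint : ∀ j, ∀ S ∈ G j, ∀ T ∈ G j, S ≠ T → Disjoint S T

/-- The size of a QAC circuit: the number of CZ gates acting on at least 2 qubits. -/
def QACCircuit.size {n d : ℕ} (c : QACCircuit n d) : ℕ :=
  ∑ j, ((c.G j).filter fun S => 2 ≤ S.card).card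

/-- The unitary implemented by a QAC circuit. -/
def QACCircuit.matrix {n d : ℕ} (c : QACCircuit n d) :
    Matrix (Fin n → Bool) (Fin n → Bool) ℂ :=
  c.L 0 * (List.ofFn fun j : Fin d => czLayer (c.G j) * c.L j.succ).prod

/-- The Fourier coefficient `f̂(S)` of a Boolean function `f : {0,1}^n → {0,1}`. -/
def boolFourierCoeff {n : ℕ} (f : (Fin n → Bool) → Bool) (S : Finset (Fin n)) : ℝ :=
  ((2 : ℝ) ^ n)⁻¹ *
    ∑ x : Fin n → Bool,
      (if f x then (-1 : ℝ) else 1) * ∏ i ∈ S, (if x i then (-1 : ℝ) else 1)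

/-- The Fourier weight of a Boolean function above degree `k`. -/
def fweightAbove {n : ℕ} (k : ℕ) (f : (Fin n → Bool) → Bool) : ℝ :=
  ∑ S : Finset (Fin n), if k < S.card then (boolFourierCoeff f S) ^ 2 else 0

namespace WeightCleanAuxProof

variable {n a : ℕ}

/-- The clean auxiliary state `|0^a⟩⟨0^a|`. -/
def psi0 (a : ℕ) : Matrix (Fin a → Bool) (Fin a → Bool) ℂ :=
  Matrix.of fun z z' => if (∀ j, z j = false) ∧ (∀ j, z' j = false) then (1 : ℂ) else 0

/-- Embed an `(n+1)`-bit string and an `a`-bit string into an `(n+a+1)`-bit string. -/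
def embB (w : Fin (n + 1) → Bool) (z : Fin a → Bool) : Fin (n + a + 1) → Bool :=
  Fin.snoc (Fin.append (fun i => w i.castSucc) z) (w (Fin.last n))

/-- Embed an `(n+1)`-qubit Pauli and an `{I,Z}^a` choice into an `(n+a+1)`-qubit Pauli. -/
def embP (p : Fin (n + 1) → Fin 4) (s : Fin a → Bool) : Fin (n + a + 1) → Fin 4 :=
  Fin.snoc (Fin.append (fun i => p i.castSucc) (fun j => if s j then 3 else 0))
    (p (Fin.last n))

@[simp] lemma embB_left (w : Fin (n + 1) → Bool) (z : Fin a → Bool) (i : Fin n) :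
    embB w z ((Fin.castAdd a i).castSucc) = w i.castSucc := by
  simp [embB, Fin.snoc_castSucc, Fin.append_left]

@[simp] lemma embB_right (w : Fin (n + 1) → Bool) (z : Fin a → Bool) (j : Fin a) :
    embB w z ((Fin.natAdd n j).castSucc) = z j := by
  simp only [embB, Fin.snoc_castSucc, Fin.append_right]

@[simp] lemma embB_last (w : Fin (n + 1) → Bool) (z : Fin a → Bool) :
    embB w z (Fin.last (n + a)) = w (Fin.last n) := by
  simp [embB, Fin.snoc_last]

@[simp] lemma embP_left (p : Fin (n + 1) → Fin 4) (s : Fin a → Bool) (i : Fin n) :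
    embP p s ((Fin.castAdd a i).castSucc) = p i.castSucc := by
  simp [embP, Fin.snoc_castSucc, Fin.append_left]

@[simp] lemma embP_right (p : Fin (n + 1) → Fin 4) (s : Fin a → Bool) (j : Fin a) :
    embP p s ((Fin.natAdd n j).castSucc) = if s j then 3 else 0 := by
  simp only [embP, Fin.snoc_castSucc, Fin.append_right]

@[simp] lemma embP_last (p : Fin (n + 1) → Fin 4) (s : Fin a → Bool) :
    embP p s (Fin.last (n + a)) = p (Fin.last n) := by
  simp [embP, Fin.snoc_last]

/-- The equivalence `(Fin (n+1) → Bool) × (Fin a → Bool) ≃ (Fin (n+a+1) → Bool)`. -/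
def eB : ((Fin (n + 1) → Bool) × (Fin a → Bool)) ≃ (Fin (n + a + 1) → Bool) where
  toFun wz := embB wz.1 wz.2
  invFun u :=
    (Fin.snoc (fun i => u ((Fin.castAdd a i).castSucc)) (u (Fin.last (n + a))),
      fun j => u ((Fin.natAdd n j).castSucc))
  left_inv := by
    rintro ⟨w, z⟩
    refine Prod.ext ?_ ?_
    · funext i
      refine Fin.lastCases ?_ (fun i => ?_) i
      · simp
      · simp
    · funext j
      simp [-Fin.castSucc_natAdd]
  right_inv := by
    intro u
    funext i
    refine Fin.lastCases ?_ (fun i => ?_) i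
    · simp [embB, Fin.snoc_last]
    · refine Fin.addCases (fun i => ?_) (fun j => ?_) i
      · simp [embB, Fin.snoc_castSucc, Fin.append_left]
      · simp only [embB, Fin.snoc_castSucc, Fin.append_right]

@[simp] lemma eB_apply (wz : (Fin (n + 1) → Bool) × (Fin a → Bool)) :
    eB wz = embB wz.1 wz.2 := rfl

lemma pauliCoeff_expand {m : ℕ} (A : Matrix (Fin m → Bool) (Fin m → Bool) ℂ)
    (p : Fin m → Fin 4) :
    pauliCoeff A p = ((2 : ℂ) ^ m)⁻¹ * ∑ w, ∑ w', pauliTensor p w w' * A w' w := by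
  simp [pauliCoeff, Matrix.trace, Matrix.mul_apply, Matrix.diag]

lemma pauliMat_zero_add_three (b b' : Bool) :
    pauliMat 0 b b' + pauliMat 3 b b' = if b = false ∧ b' = false then 2 else 0 := by
  have h0 : (3 : Fin 4) ≠ 0 := by decide
  have h1 : (3 : Fin 4) ≠ 1 := by decide
  have h2 : (3 : Fin 4) ≠ 2 := by decide
  cases b <;> cases b' <;> norm_num [pauliMat, h0, h1, h2]

lemma sum_aux (z z' : Fin a → Bool) :
    (∑ s : Fin a → Bool, ∏ j, pauliMat (if s j then 3 else 0) (z j) (z' j))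
      = if z = (fun _ => false) ∧ z' = (fun _ => false) then (2 : ℂ) ^ a else 0 := by
  classical
  have step1 : (∑ s : Fin a → Bool, ∏ j, pauliMat (if s j then 3 else 0) (z j) (z' j))
      = ∏ j, ∑ b : Bool, pauliMat (if b then 3 else 0) (z j) (z' j) :=
    (Fintype.prod_sum (f := fun (j : Fin a) (b : Bool) => pauliMat (if b then 3 else 0) (z j) (z' j))).symm
  rw [step1]
  have step2 : ∀ j : Fin a, (∑ b : Bool, pauliMat (if b then 3 else 0) (z j) (z' j))
      = if z j = false ∧ z' j = false then (2 : ℂ) else 0 := by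
    intro j
    rw [Fintype.sum_bool]
    simpa [add_comm] using pauliMat_zero_add_three (z j) (z' j)
  simp only [step2]
  by_cases h : z = (fun _ => false) ∧ z' = (fun _ => false)
  · obtain ⟨hz, hz'⟩ := h
    subst hz; subst hz'
    simp
  · rw [if_neg h]
    have : ∃ j, ¬(z j = false ∧ z' j = false) := by
      by_contra hc
      push_neg at hc
      exact h ⟨funext fun j => (hc j).1, funext fun j => (hc j).2⟩
    obtain ⟨j, hj⟩ := this
    exact Finset.prod_eq_zero (Finset.mem_univ j) (if_neg hj)

lemma pauliTensor_embP (p : Fin (n + 1) → Fin 4) (s : Fin a → Bool)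
    (w w' : Fin (n + 1) → Bool) (z z' : Fin a → Bool) :
    pauliTensor (embP p s) (embB w z) (embB w' z')
      = pauliTensor p w w' * ∏ j, pauliMat (if s j then 3 else 0) (z j) (z' j) := by
  simp only [pauliTensor, Matrix.of_apply]
  rw [Fin.prod_univ_castSucc
    (f := fun i : Fin (n + a + 1) => pauliMat (embP p s i) (embB w z i) (embB w' z' i))]
  rw [Fin.prod_univ_add
    (f := fun i : Fin (n + a) =>
      pauliMat (embP p s i.castSucc) (embB w z i.castSucc) (embB w' z' i.castSucc))]
  rw [Fin.prod_univ_castSucc (f := fun i : Fin (n + 1) => pauliMat (p i) (w i) (w' i))]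
  simp only [embP_left, embP_right, embP_last, embB_left, embB_right, embB_last]
  ring

lemma choi_pt (E : Matrix (Fin (n + a) → Bool) (Fin (n + a) → Bool) ℂ → Matrix Bool Bool ℂ)
    (w w' : Fin (n + 1) → Bool) :
    choiOfChannel (fun ρ => E (tensorNA ρ (psi0 a))) w w'
      = choiOfChannel E (embB w fun _ => false) (embB w' fun _ => false) := by
  classical
  have hiff : ∀ (w : Fin (n + 1) → Bool) (u : Fin (n + a) → Bool),
      ((fun i : Fin (n + a) => embB w (fun _ => false) i.castSucc) = u)
        ↔ ((fun i : Fin n => w i.castSucc) = fun i => u (Fin.castAdd a i))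
            ∧ ∀ j, u (Fin.natAdd n j) = false := by
    intro w u
    constructor
    · rintro rfl
      refine ⟨funext fun i => ?_, fun j => ?_⟩
      · simp
      · simp [-Fin.castSucc_natAdd]
    · rintro ⟨h1, h2⟩
      funext i
      refine Fin.addCases (fun i => ?_) (fun j => ?_) i
      · simpa using congrFun h1 i
      · simp [h2 j, -Fin.castSucc_natAdd]
  have hstd : tensorNA (Matrix.single (fun i : Fin n => w i.castSucc)
      (fun i : Fin n => w' i.castSucc) 1) (psi0 a)
      = Matrix.single (fun i : Fin (n + a) => embB w (fun _ => false) i.castSucc)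
          (fun i : Fin (n + a) => embB w' (fun _ => false) i.castSucc) 1 := by
    ext u v
    simp only [tensorNA, psi0, Matrix.single, Matrix.of_apply]
    simp only [hiff]
    by_cases h1 : (fun i : Fin n => w i.castSucc) = fun i => u (Fin.castAdd a i) <;>
      by_cases h2 : (fun i : Fin n => w' i.castSucc) = fun i => v (Fin.castAdd a i) <;>
      by_cases h3 : ∀ j, u (Fin.natAdd n j) = false <;>
      by_cases h4 : ∀ j, v (Fin.natAdd n j) = false <;>
      simp [h1, h2, h3, h4]
  show E (tensorNA (Matrix.single _ _ 1) (psi0 a)) _ _ = _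
  rw [hstd]
  simp only [choiOfChannel, Matrix.of_apply, embB_last]

lemma coeff_eq (E : Matrix (Fin (n + a) → Bool) (Fin (n + a) → Bool) ℂ → Matrix Bool Bool ℂ)
    (p : Fin (n + 1) → Fin 4) :
    pauliCoeff (choiOfChannel fun ρ => E (tensorNA ρ (psi0 a))) p
      = ∑ s : Fin a → Bool, pauliCoeff (choiOfChannel E) (embP p s) := by
  classical
  have hc : ((2 : ℂ) ^ (n + a + 1))⁻¹ * (2 : ℂ) ^ a = ((2 : ℂ) ^ (n + 1))⁻¹ := by
    have h2 : (2 : ℂ) ≠ 0 := two_ne_zero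
    field_simp
    ring
  have collapse : ∀ w w' : Fin (n + 1) → Bool,
      (∑ z : Fin a → Bool, ∑ z' : Fin a → Bool,
        (pauliTensor p w w' *
            (if z = (fun _ => false) ∧ z' = (fun _ => false) then (2 : ℂ) ^ a else 0)) *
          choiOfChannel E (embB w' z') (embB w z))
      = (2 : ℂ) ^ a * (pauliTensor p w w' *
          choiOfChannel E (embB w' fun _ => false) (embB w fun _ => false)) := by
    intro w w'
    rw [Finset.sum_eq_single (fun _ => false : Fin a → Bool)]
    · rw [Finset.sum_eq_single (fun _ => false : Fin a → Bool)]
      · rw [if_pos ⟨rfl, rfl⟩]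
        ring
      · intro z' _ hz'
        simp [hz']
      · simp
    · intro z _ hz
      apply Finset.sum_eq_zero
      intro z' _
      simp [hz]
    · simp
  symm
  calc ∑ s : Fin a → Bool, pauliCoeff (choiOfChannel E) (embP p s)
      = ((2 : ℂ) ^ (n + a + 1))⁻¹ * ∑ s : Fin a → Bool, ∑ u, ∑ u',
          pauliTensor (embP p s) u u' * choiOfChannel E u' u := by
        rw [Finset.mul_sum]
        exact Finset.sum_congr rfl fun s _ => pauliCoeff_expand _ _
    _ = ((2 : ℂ) ^ (n + a + 1))⁻¹ * ∑ u, ∑ u',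
          (∑ s : Fin a → Bool, pauliTensor (embP p s) u u') * choiOfChannel E u' u := by
        congr 1
        rw [Finset.sum_comm]
        refine Finset.sum_congr rfl fun u _ => ?_
        rw [Finset.sum_comm]
        exact Finset.sum_congr rfl fun u' _ => (Finset.sum_mul _ _ _).symm
    _ = ((2 : ℂ) ^ (n + a + 1))⁻¹ *
          ∑ wz : (Fin (n + 1) → Bool) × (Fin a → Bool),
          ∑ wz' : (Fin (n + 1) → Bool) × (Fin a → Bool),
          (∑ s : Fin a → Bool,
              pauliTensor (embP p s) (embB wz.1 wz.2) (embB wz'.1 wz'.2)) *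
            choiOfChannel E (embB wz'.1 wz'.2) (embB wz.1 wz.2) := by
        congr 1
        rw [← Equiv.sum_comp (eB (n := n) (a := a))
          (fun u => ∑ u', (∑ s : Fin a → Bool, pauliTensor (embP p s) u u') *
            choiOfChannel E u' u)]
        simp only [eB_apply]
        refine Finset.sum_congr rfl fun wz _ => ?_
        rw [← Equiv.sum_comp (eB (n := n) (a := a))
          (fun u' => (∑ s : Fin a → Bool,
            pauliTensor (embP p s) (embB wz.1 wz.2) u') *
              choiOfChannel E u' (embB wz.1 wz.2))]
        simp only [eB_apply]
    _ = ((2 : ℂ) ^ (n + a + 1))⁻¹ *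
          ∑ w, ∑ z, ∑ w', ∑ z',
          (pauliTensor p w w' *
              (if z = (fun _ => false) ∧ z' = (fun _ => false) then (2 : ℂ) ^ a else 0)) *
            choiOfChannel E (embB w' z') (embB w z) := by
        congr 1
        rw [Fintype.sum_prod_type]
        refine Finset.sum_congr rfl fun w _ => ?_
        refine Finset.sum_congr rfl fun z _ => ?_
        rw [Fintype.sum_prod_type]
        refine Finset.sum_congr rfl fun w' _ => ?_
        refine Finset.sum_congr rfl fun z' _ => ?_
        congr 1
        simp only [pauliTensor_embP]
        rw [← Finset.mul_sum, sum_aux]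
    _ = ((2 : ℂ) ^ (n + a + 1))⁻¹ *
          ∑ w, ∑ w', (2 : ℂ) ^ a * (pauliTensor p w w' *
            choiOfChannel E (embB w' fun _ => false) (embB w fun _ => false)) := by
        congr 1
        refine Finset.sum_congr rfl fun w _ => ?_
        rw [Finset.sum_comm]
        exact Finset.sum_congr rfl fun w' _ => collapse w w'
    _ = ((2 : ℂ) ^ (n + 1))⁻¹ *
          ∑ w, ∑ w', pauliTensor p w w' *
            choiOfChannel E (embB w' fun _ => false) (embB w fun _ => false) := by
        rw [show (∑ w, ∑ w', (2 : ℂ) ^ a * (pauliTensor p w w' *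
              choiOfChannel E (embB w' fun _ => false) (embB w fun _ => false)))
            = (2 : ℂ) ^ a * ∑ w, ∑ w', pauliTensor p w w' *
              choiOfChannel E (embB w' fun _ => false) (embB w fun _ => false) by
          rw [Finset.mul_sum]
          exact Finset.sum_congr rfl fun w _ => (Finset.mul_sum _ _ _).symm]
        rw [← mul_assoc, hc]
    _ = pauliCoeff (choiOfChannel fun ρ => E (tensorNA ρ (psi0 a))) p := by
        rw [pauliCoeff_expand]
        congr 1
        refine Finset.sum_congr rfl fun w _ => Finset.sum_congr rfl fun w' _ => ?_
        rw [choi_pt]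

/-- Embed the `n+1` "real" wire indices into the `n+a+1` wire indices. -/
def emb1 : Fin (n + 1) → Fin (n + a + 1) :=
  Fin.snoc (fun i => (Fin.castAdd a i).castSucc) (Fin.last (n + a))

@[simp] lemma embP_emb1 (p : Fin (n + 1) → Fin 4) (s : Fin a → Bool) (i : Fin (n + 1)) :
    embP p s (emb1 i) = p i := by
  refine Fin.lastCases ?_ (fun i => ?_) i
  · simp [emb1, Fin.snoc_last]
  · simp [emb1, Fin.snoc_castSucc]

lemma emb1_injective : Function.Injective (emb1 (n := n) (a := a)) := by
  have hL : Function.LeftInverse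
      (fun j : Fin (n + a + 1) =>
        if h : (j : ℕ) < n then (⟨(j : ℕ), by omega⟩ : Fin (n + 1)) else Fin.last n)
      (emb1 (n := n) (a := a)) := by
    intro i
    refine Fin.lastCases ?_ (fun i => ?_) i
    · simp only [emb1, Fin.snoc_last]
      rw [dif_neg (by simp [Fin.last])]
    · simp only [emb1, Fin.snoc_castSucc]
      rw [dif_pos (by simp [i.isLt])]
      ext
      simp
  exact hL.injective

lemma deg_le (p : Fin (n + 1) → Fin 4) (s : Fin a → Bool) :
    pauliDeg p ≤ pauliDeg (embP p s) := by
  unfold pauliDeg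
  refine Finset.card_le_card_of_injOn emb1 (fun i hi => ?_) emb1_injective.injOn
  simp only [Finset.coe_filter, Finset.mem_coe, Finset.mem_filter, Set.mem_setOf_eq, Finset.mem_univ, true_and] at hi ⊢
  simpa using hi

lemma embP_injective :
    Function.Injective
      (fun ps : (Fin (n + 1) → Fin 4) × (Fin a → Bool) => embP ps.1 ps.2) := by
  rintro ⟨p, s⟩ ⟨p', s'⟩ h
  simp only at h
  have hp : p = p' := funext fun i => by
    have hh := congrFun h (emb1 i)
    rwa [embP_emb1, embP_emb1] at hh
  have hs : s = s' := funext fun j => by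
    have hh := congrFun h ((Fin.natAdd n j).castSucc)
    rw [embP_right, embP_right] at hh
    by_cases hj : s j <;> by_cases hj' : s' j <;>
      simp_all
  simp [hp, hs]

end WeightCleanAuxProof

/-- Fixing `a` auxiliary qubits to the clean state `|0^a⟩⟨0^a|` blows up
the Pauli weight above any degree by at most a factor `2^a`. -/
theorem weight_clean_aux (n a : ℕ)
    (ℰ : Matrix (Fin (n + a) → Bool) (Fin (n + a) → Bool) ℂ →ₗ[ℂ] Matrix Bool Bool ℂ) :
    ∀ k : ℕ, k ≤ n + 1 →
      weightAbove k
          (choiOfChannel fun ρ =>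
            ℰ (tensorNA ρ
                (Matrix.of fun z z' : Fin a → Bool =>
                  if (∀ j, z j = false) ∧ (∀ j, z' j = false) then (1 : ℂ) else 0))) ≤
        2 ^ a * weightAbove k (choiOfChannel fun σ => ℰ σ) := by
  intro k _
  classical
  open WeightCleanAuxProof in
  set Φ := choiOfChannel fun σ : Matrix (Fin (n + a) → Bool) (Fin (n + a) → Bool) ℂ => ℰ σ
    with hΦ
  have hco : ∀ p : Fin (n + 1) → Fin 4,
      pauliCoeff (choiOfChannel fun ρ =>
        ℰ (tensorNA ρ
            (Matrix.of fun z z' : Fin a → Bool =>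
              if (∀ j, z j = false) ∧ (∀ j, z' j = false) then (1 : ℂ) else 0))) p
        = ∑ s : Fin a → Bool, pauliCoeff Φ (embP p s) :=
    fun p => coeff_eq (fun σ => ℰ σ) p
  unfold weightAbove
  calc (∑ p : Fin (n + 1) → Fin 4,
        if k < pauliDeg p then
          ‖pauliCoeff (choiOfChannel fun ρ =>
            ℰ (tensorNA ρ
                (Matrix.of fun z z' : Fin a → Bool =>
                  if (∀ j, z j = false) ∧ (∀ j, z' j = false) then (1 : ℂ) else 0))) p‖ ^ 2
        else 0)
      ≤ ∑ p : Fin (n + 1) → Fin 4,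
          if k < pauliDeg p then
            (2 : ℝ) ^ a * ∑ s : Fin a → Bool,
              ‖pauliCoeff Φ (embP p s)‖ ^ 2
          else 0 := by
        refine Finset.sum_le_sum fun p _ => ?_
        split_ifs
        · rw [hco p]
          calc ‖∑ s : Fin a → Bool, pauliCoeff Φ (embP p s)‖ ^ 2
              ≤ (∑ s : Fin a → Bool, ‖pauliCoeff Φ (embP p s)‖) ^ 2 := by
                refine pow_le_pow_left₀ (norm_nonneg _) ?_ 2
                exact norm_sum_le _ _
            _ ≤ (2 : ℝ) ^ a * ∑ s : Fin a → Bool,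
                  ‖pauliCoeff Φ (embP p s)‖ ^ 2 := by
                have hCS := Finset.sum_mul_sq_le_sq_mul_sq Finset.univ
                  (fun _ : Fin a → Bool => (1 : ℝ))
                  (fun s => ‖pauliCoeff Φ (embP p s)‖)
                simpa [Finset.card_univ] using hCS
        · exact le_rfl
      _ = (2 : ℝ) ^ a * ∑ p : Fin (n + 1) → Fin 4, ∑ s : Fin a → Bool,
            if k < pauliDeg p then ‖pauliCoeff Φ (embP p s)‖ ^ 2 else 0 := by
        rw [Finset.mul_sum]
        refine Finset.sum_congr rfl fun p _ => ?_
        split_ifs <;> simp [Finset.mul_sum]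
      _ ≤ (2 : ℝ) ^ a * ∑ p : Fin (n + 1) → Fin 4, ∑ s : Fin a → Bool,
            if k < pauliDeg (embP p s) then
              ‖pauliCoeff Φ (embP p s)‖ ^ 2 else 0 := by
        refine mul_le_mul_of_nonneg_left ?_ (by positivity)
        refine Finset.sum_le_sum fun p _ => Finset.sum_le_sum fun s _ => ?_
        by_cases h1 : k < pauliDeg p
        · rw [if_pos h1, if_pos (lt_of_lt_of_le h1 (deg_le p s))]
        · rw [if_neg h1]
          split_ifs <;> positivity
      _ ≤ (2 : ℝ) ^ a * ∑ P : Fin (n + a + 1) → Fin 4,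
            if k < pauliDeg P then ‖pauliCoeff Φ P‖ ^ 2 else 0 := by
        refine mul_le_mul_of_nonneg_left ?_ (by positivity)
        have hsplit : (∑ ps : (Fin (n + 1) → Fin 4) × (Fin a → Bool),
              if k < pauliDeg (embP ps.1 ps.2) then
                ‖pauliCoeff Φ (embP ps.1 ps.2)‖ ^ 2 else 0)
            = ∑ p : Fin (n + 1) → Fin 4, ∑ s : Fin a → Bool,
              if k < pauliDeg (embP p s) then
                ‖pauliCoeff Φ (embP p s)‖ ^ 2 else 0 :=
          Fintype.sum_prod_type _
        rw [← hsplit]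
        have himg : (∑ ps ∈ (Finset.univ :
              Finset ((Fin (n + 1) → Fin 4) × (Fin a → Bool))),
            (fun P => if k < pauliDeg P then ‖pauliCoeff Φ P‖ ^ 2 else 0)
              (embP ps.1 ps.2))
            = ∑ P ∈ Finset.univ.image
                (fun ps : (Fin (n + 1) → Fin 4) × (Fin a → Bool) => embP ps.1 ps.2),
              (if k < pauliDeg P then ‖pauliCoeff Φ P‖ ^ 2 else 0) :=
          (Finset.sum_image
            (f := fun P : Fin (n + a + 1) → Fin 4 =>
              if k < pauliDeg P then ‖pauliCoeff Φ P‖ ^ 2 else 0)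
            (g := fun ps : (Fin (n + 1) → Fin 4) × (Fin a → Bool) => embP ps.1 ps.2)
            (fun x _ y _ hxy => embP_injective hxy)).symm
        calc (∑ ps : (Fin (n + 1) → Fin 4) × (Fin a → Bool),
              if k < pauliDeg (embP ps.1 ps.2) then
                ‖pauliCoeff Φ (embP ps.1 ps.2)‖ ^ 2 else 0)
            = ∑ P ∈ Finset.univ.image
                (fun ps : (Fin (n + 1) → Fin 4) × (Fin a → Bool) => embP ps.1 ps.2),
              (if k < pauliDeg P then ‖pauliCoeff Φ P‖ ^ 2 else 0) := himg
          _ ≤ ∑ P : Fin (n + a + 1) → Fin 4,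
              if k < pauliDeg P then ‖pauliCoeff Φ P‖ ^ 2 else 0 := by
              refine Finset.sum_le_sum_of_subset_of_nonneg (Finset.subset_univ _)
                fun P _ _ => ?_
              split_ifs <;> positivity
end
end

section
/- Let ℰ be a ℂ-linear map from (n+a)-qubit matrices to 1-qubit (2×2) matrices, let ψ be an a-qubit density matrix, and define ℰ' on n-qubit matrices by ℰ'(ρ) = ℰ(ρ ⊗ ψ). Then for every k ∈ {0, 1, …, n+1}, W^{>k}[Φ_{ℰ'}] ≤ 2^a · ‖ψ‖_F² · W^{>k}[Φ_ℰ], where the weight of Φ_{ℰ'} is over (n+1)-qubit Paulis and the weight of Φ_ℰ is over (n+a+1)-qubit Paulis. -/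
open scoped BigOperators ComplexOrder

noncomputable section

/-! ### Auxiliary lemmas for `weight_general_aux` -/

section WGAux

open Finset

/-- Completeness/orthogonality of the 1-qubit Paulis. -/
lemma pauli_complete_one (b b' c c' : Bool) :
    ∑ q : Fin 4, pauliMat q b b' * pauliMat q c c' =
      if b = c' ∧ b' = c then 2 else 0 := by
  rw [Fin.sum_univ_four]
  cases b <;> cases b' <;> cases c <;> cases c' <;>
    simp [pauliMat, Complex.I_mul_I] <;> ring_nf

lemma pauli_conj_one (q : Fin 4) (b b' : Bool) :
    (starRingEnd ℂ) (pauliMat q b b') = pauliMat q b' b := by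
  fin_cases q <;> cases b <;> cases b' <;> simp [pauliMat]

/-- Completeness/orthogonality of the `m`-qubit Pauli tensors. -/
lemma pauli_complete {m : ℕ} (u v y y' : Fin m → Bool) :
    ∑ q : Fin m → Fin 4, pauliTensor q u v * pauliTensor q y y' =
      if u = y' ∧ v = y then (2 : ℂ) ^ m else 0 := by
  have h : ∀ q : Fin m → Fin 4, pauliTensor q u v * pauliTensor q y y' =
      ∏ i, (pauliMat (q i) (u i) (v i) * pauliMat (q i) (y i) (y' i)) := by
    intro q; rw [Finset.prod_mul_distrib]; rfl
  simp_rw [h]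
  rw [← Fintype.piFinset_univ,
    ← Finset.prod_univ_sum (t := fun _ : Fin m => (Finset.univ : Finset (Fin 4)))
      (f := fun i c => pauliMat c (u i) (v i) * pauliMat c (y i) (y' i))]
  simp_rw [pauli_complete_one]
  by_cases huv : u = y' ∧ v = y
  · obtain ⟨h1, h2⟩ := huv
    subst h1; subst h2
    simp
  · rw [if_neg huv]
    have : ∃ i, ¬(u i = y' i ∧ v i = y i) := by
      by_contra hc
      push_neg at hc
      exact huv ⟨funext fun i => (hc i).1, funext fun i => (hc i).2⟩
    obtain ⟨i, hi⟩ := this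
    exact Finset.prod_eq_zero (Finset.mem_univ i) (by rw [if_neg hi])

lemma pauli_conj {m : ℕ} (q : Fin m → Fin 4) (y y' : Fin m → Bool) :
    (starRingEnd ℂ) (pauliTensor q y y') = pauliTensor q y' y := by
  simp only [pauliTensor, Matrix.of_apply, map_prod, pauli_conj_one]

/-- Flattening a sum over a product of two types. -/
lemma sum_nest2 {A B M : Type*} [Fintype A] [Fintype B] [AddCommMonoid M]
    (f : A → B → M) :
    ∑ x : A × B, f x.1 x.2 = ∑ a, ∑ b, f a b :=
  Fintype.sum_prod_type' f

/-- Flattening a sum over a product of four types. -/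
lemma sum_nest4 {A B C D M : Type*} [Fintype A] [Fintype B] [Fintype C] [Fintype D]
    [AddCommMonoid M] (f : A → B → C → D → M) :
    ∑ x : (A × B) × (C × D), f x.1.1 x.1.2 x.2.1 x.2.2 = ∑ a, ∑ b, ∑ c, ∑ d, f a b c d := by
  rw [show (∑ x : (A × B) × (C × D), f x.1.1 x.1.2 x.2.1 x.2.2) =
      ∑ ab : A × B, ∑ cd : C × D, f ab.1 ab.2 cd.1 cd.2 from
    Fintype.sum_prod_type' fun (ab : A × B) (cd : C × D) => f ab.1 ab.2 cd.1 cd.2,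
    show (∑ ab : A × B, ∑ cd : C × D, f ab.1 ab.2 cd.1 cd.2) =
      ∑ a, ∑ b, ∑ cd : C × D, f a b cd.1 cd.2 from
    Fintype.sum_prod_type' fun (a : A) (b : B) => ∑ cd : C × D, f a b cd.1 cd.2]
  refine Finset.sum_congr rfl fun a _ => Finset.sum_congr rfl fun b _ => ?_
  exact sum_nest2 fun c d => f a b c d

lemma sum_rot3 {A B C M : Type*} [Fintype A] [Fintype B] [Fintype C] [AddCommMonoid M]
    (f : A → B → C → M) :
    ∑ s : A, ∑ t : B, ∑ r : C, f s t r = ∑ r : C, ∑ s : A, ∑ t : B, f s t r := by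
  calc ∑ s : A, ∑ t : B, ∑ r : C, f s t r
      = ∑ s : A, ∑ r : C, ∑ t : B, f s t r :=
        Finset.sum_congr rfl fun s _ => Finset.sum_comm
    _ = ∑ r : C, ∑ s : A, ∑ t : B, f s t r := Finset.sum_comm

variable {n a : ℕ}

/-- The small combined index `(x, b) ↦ (x₁,…,xₙ,b)`. -/
def eS {α : Type*} (s : (Fin n → α) × α) : Fin (n + 1) → α := Fin.snoc s.1 s.2

/-- The big combined index `(x, b), y ↦ (x₁,…,xₙ,y₁,…,y_a,b)`. -/
def eB {α : Type*} (s : (Fin n → α) × α) (y : Fin a → α) : Fin (n + a + 1) → α :=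
  Fin.snoc (Fin.append s.1 y) s.2

/-- The Pauli `p ⋈ q` placing `p`'s input part on the first `n` qubits, `q` on the
auxiliary qubits and `p`'s output part on the last qubit. -/
def jP (p : Fin (n + 1) → Fin 4) (q : Fin a → Fin 4) : Fin (n + a + 1) → Fin 4 :=
  eB (fun i => p i.castSucc, p (Fin.last n)) q

@[simp] lemma eB_castAdd {α : Type*} (s : (Fin n → α) × α) (y : Fin a → α) (i : Fin n) :
    eB s y (Fin.castSucc (Fin.castAdd a i)) = s.1 i := by
  simp [eB, Fin.snoc_castSucc, Fin.append_left]

@[simp] lemma eB_natAdd {α : Type*} (s : (Fin n → α) × α) (y : Fin a → α) (j : Fin a) :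
    eB s y (Fin.castSucc (Fin.natAdd n j)) = y j := by
  simp only [eB, Fin.snoc_castSucc, Fin.append_right]

@[simp] lemma eB_natAdd' {α : Type*} (s : (Fin n → α) × α) (y : Fin a → α) (j : Fin a) :
    eB s y (Fin.natAdd n j.castSucc) = y j :=
  eB_natAdd s y j

@[simp] lemma eB_last {α : Type*} (s : (Fin n → α) × α) (y : Fin a → α) :
    eB s y (Fin.last (n + a)) = s.2 := by
  simp [eB]

lemma eS_bijective {α : Type*} :
    Function.Bijective (eS : (Fin n → α) × α → (Fin (n + 1) → α)) := by
  constructor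
  · rintro ⟨x, b⟩ ⟨x', b'⟩ h
    have h1 : ∀ i : Fin n, x i = x' i := fun i => by
      have := congrFun h (Fin.castSucc i); simpa [eS] using this
    have h2 : b = b' := by
      have := congrFun h (Fin.last n); simpa [eS] using this
    exact Prod.ext (funext h1) h2
  · intro W
    exact ⟨⟨Fin.init W, W (Fin.last n)⟩, Fin.snoc_init_self W⟩

lemma eB_bijective {α : Type*} :
    Function.Bijective (fun t : ((Fin n → α) × α) × (Fin a → α) => eB t.1 t.2) := by
  constructor
  · rintro ⟨⟨x, b⟩, y⟩ ⟨⟨x', b'⟩, y'⟩ h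
    simp only [Prod.mk.injEq]
    refine ⟨⟨funext fun i => ?_, ?_⟩, funext fun j => ?_⟩
    · have := congrFun h (Fin.castSucc (Fin.castAdd a i)); simpa using this
    · have := congrFun h (Fin.last (n + a)); simpa using this
    · have := congrFun h (Fin.castSucc (Fin.natAdd n j)); simpa using this
  · intro W
    refine ⟨⟨⟨fun i => W (Fin.castSucc (Fin.castAdd a i)), W (Fin.last (n + a))⟩,
      fun j => W (Fin.castSucc (Fin.natAdd n j))⟩, ?_⟩
    funext i
    refine Fin.lastCases ?_ (fun i0 => ?_) i
    · simp
    · refine Fin.addCases (fun i1 => ?_) (fun j1 => ?_) i0 <;> simp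

lemma sum_eS {α M : Type*} [Fintype α] [AddCommMonoid M] (F : (Fin (n + 1) → α) → M) :
    ∑ w, F w = ∑ s : (Fin n → α) × α, F (eS s) :=
  (Function.Bijective.sum_comp eS_bijective F).symm

lemma sum_eB {α M : Type*} [Fintype α] [AddCommMonoid M] (F : (Fin (n + a + 1) → α) → M) :
    ∑ w, F w = ∑ s : (Fin n → α) × α, ∑ y : Fin a → α, F (eB s y) := by
  rw [← Function.Bijective.sum_comp (eB_bijective (n := n) (a := a) (α := α)) F,
    Fintype.sum_prod_type]

lemma prod_split {M : Type*} [CommMonoid M] (F : Fin (n + a + 1) → M) :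
    ∏ i, F i = ((∏ i : Fin n, F (Fin.castSucc (Fin.castAdd a i))) *
      ∏ j : Fin a, F (Fin.castSucc (Fin.natAdd n j))) * F (Fin.last (n + a)) := by
  rw [Fin.prod_univ_castSucc, Fin.prod_univ_add]

lemma sum_split (F : Fin (n + a + 1) → ℕ) :
    ∑ i, F i = ((∑ i : Fin n, F (Fin.castSucc (Fin.castAdd a i))) +
      ∑ j : Fin a, F (Fin.castSucc (Fin.natAdd n j))) + F (Fin.last (n + a)) := by
  rw [Fin.sum_univ_castSucc, Fin.sum_univ_add]

lemma pauliTensor_eB (p : Fin (n + 1) → Fin 4) (q : Fin a → Fin 4)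
    (s t : (Fin n → Bool) × Bool) (y y' : Fin a → Bool) :
    pauliTensor (jP p q) (eB s y) (eB t y') =
      pauliTensor p (eS s) (eS t) * pauliTensor q y y' := by
  simp only [pauliTensor, Matrix.of_apply]
  rw [prod_split (fun i => pauliMat (jP p q i) (eB s y i) (eB t y' i)),
    Fin.prod_univ_castSucc (fun i => pauliMat (p i) (eS s i) (eS t i))]
  simp only [jP, eB_castAdd, eB_natAdd, eB_last, eS, Fin.snoc_castSucc, Fin.snoc_last]
  ring

lemma pauliDeg_le_jP (p : Fin (n + 1) → Fin 4) (q : Fin a → Fin 4) :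
    pauliDeg p ≤ pauliDeg (jP p q) := by
  classical
  have h1 : pauliDeg p = ∑ i : Fin (n + 1), if p i ≠ 0 then 1 else 0 := by
    simp [pauliDeg, Finset.card_filter]
  have h2 : pauliDeg (jP p q) = ∑ i, if jP p q i ≠ 0 then 1 else 0 := by
    simp [pauliDeg, Finset.card_filter]
  rw [h1, h2, sum_split (fun i => if jP p q i ≠ 0 then 1 else 0),
    Fin.sum_univ_castSucc (fun i => if p i ≠ 0 then 1 else 0)]
  simp only [jP, eB_castAdd, eB_natAdd, eB_last]
  omega

lemma jP_injective :
    Function.Injective (fun t : (Fin (n + 1) → Fin 4) × (Fin a → Fin 4) => jP t.1 t.2) := by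
  rintro ⟨p, q⟩ ⟨p', q'⟩ h
  simp only at h
  have h1 : ∀ i : Fin n, p i.castSucc = p' i.castSucc := fun i => by
    have := congrFun h (Fin.castSucc (Fin.castAdd a i)); simpa [jP] using this
  have h2 : p (Fin.last n) = p' (Fin.last n) := by
    have := congrFun h (Fin.last (n + a)); simpa [jP] using this
  have h3 : ∀ j : Fin a, q j = q' j := fun j => by
    have := congrFun h (Fin.castSucc (Fin.natAdd n j)); simpa [jP] using this
  refine Prod.ext (funext fun i => ?_) (funext h3)
  refine Fin.lastCases ?_ (fun i0 => ?_) i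
  · exact h2
  · exact h1 i0

/-- `jP` as an embedding of pairs. -/
def embJP : ((Fin (n + 1) → Fin 4) × (Fin a → Fin 4)) ↪ (Fin (n + a + 1) → Fin 4) :=
  ⟨fun t => jP t.1 t.2, jP_injective⟩

lemma choi_entry {m : ℕ} (E : Matrix (Fin m → Bool) (Fin m → Bool) ℂ → Matrix Bool Bool ℂ)
    (x x' : Fin m → Bool) (b b' : Bool) :
    choiOfChannel E (Fin.snoc x b) (Fin.snoc x' b') = E (Matrix.single x x' 1) b b' := by
  simp [choiOfChannel, Fin.snoc_castSucc, Fin.snoc_last]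

lemma append_eq_iff {α : Type*} (x : Fin n → α) (y : Fin a → α) (u : Fin (n + a) → α) :
    Fin.append x y = u ↔
      (x = fun i => u (Fin.castAdd a i)) ∧ (y = fun j => u (Fin.natAdd n j)) := by
  constructor
  · rintro rfl
    exact ⟨funext fun i => (Fin.append_left x y i).symm,
      funext fun j => (Fin.append_right x y j).symm⟩
  · rintro ⟨hx, hy⟩
    subst hx; subst hy
    funext i
    refine Fin.addCases (fun i1 => ?_) (fun j1 => ?_) i
    · rw [Fin.append_left]
    · rw [Fin.append_right]

lemma tensorNA_std (ψ : Matrix (Fin a → Bool) (Fin a → Bool) ℂ) (x x' : Fin n → Bool) :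
    tensorNA (Matrix.single x x' 1) ψ =
      ∑ r : (Fin a → Bool) × (Fin a → Bool),
        ψ r.1 r.2 • Matrix.single (Fin.append x r.1) (Fin.append x' r.2) 1 := by
  ext u v
  simp only [tensorNA, Matrix.of_apply, Matrix.sum_apply, Matrix.smul_apply,
    Matrix.single, smul_eq_mul]
  simp only [append_eq_iff]
  by_cases h1 : x = fun i => u (Fin.castAdd a i)
  · by_cases h2 : x' = fun i => v (Fin.castAdd a i)
    · rw [Finset.sum_eq_single ((fun j => u (Fin.natAdd n j)), (fun j => v (Fin.natAdd n j)))]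
      · simp [h1, h2]
      · rintro ⟨y, y'⟩ _ hne
        rw [if_neg, mul_zero]
        rintro ⟨⟨-, hy⟩, -, hy'⟩
        exact hne (Prod.ext hy hy')
      · intro habs; exact absurd (Finset.mem_univ _) habs
    · rw [if_neg (by tauto), zero_mul]
      exact (Finset.sum_eq_zero fun r _ => by rw [if_neg (by tauto), mul_zero]).symm
  · rw [if_neg (by tauto), zero_mul]
    exact (Finset.sum_eq_zero fun r _ => by rw [if_neg (by tauto), mul_zero]).symm

variable (ℰ : Matrix (Fin (n + a) → Bool) (Fin (n + a) → Bool) ℂ →ₗ[ℂ] Matrix Bool Bool ℂ)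
  (ψ : Matrix (Fin a → Bool) (Fin a → Bool) ℂ)

lemma choi_rel (s t : (Fin n → Bool) × Bool) :
    choiOfChannel (fun ρ => ℰ (tensorNA ρ ψ)) (eS s) (eS t) =
      ∑ r : (Fin a → Bool) × (Fin a → Bool), ψ r.1 r.2 *
        choiOfChannel (fun σ => ℰ σ) (eB s r.1) (eB t r.2) := by
  show choiOfChannel _ (Fin.snoc s.1 s.2) (Fin.snoc t.1 t.2) = _
  rw [choi_entry, tensorNA_std, map_sum]
  simp only [map_smul, Matrix.sum_apply, Matrix.smul_apply, smul_eq_mul]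
  refine Finset.sum_congr rfl fun r _ => ?_
  congr 1
  exact (choi_entry (fun σ => ℰ σ) (Fin.append s.1 r.1) (Fin.append t.1 r.2) s.2 t.2).symm

/-- The "slice trace" `T p r = Σ_{s,t} P(s,t)·Φ((t,r₁),(s,r₂))`. -/
def sliceT (p : Fin (n + 1) → Fin 4) (r : (Fin a → Bool) × (Fin a → Bool)) : ℂ :=
  ∑ s : (Fin n → Bool) × Bool, ∑ t : (Fin n → Bool) × Bool,
    pauliTensor p (eS s) (eS t) * choiOfChannel (fun σ => ℰ σ) (eB t r.1) (eB s r.2)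

lemma trace_formula {α : Type*} [Fintype α] (P A : Matrix α α ℂ) :
    (P * A).trace = ∑ w, ∑ w', P w w' * A w' w := by
  simp [Matrix.trace, Matrix.diag, Matrix.mul_apply]

lemma traceA (p : Fin (n + 1) → Fin 4) :
    (pauliTensor p * choiOfChannel (fun ρ => ℰ (tensorNA ρ ψ))).trace =
      ∑ r : (Fin a → Bool) × (Fin a → Bool), ψ r.1 r.2 * sliceT ℰ p r := by
  rw [trace_formula, sum_eS]
  simp_rw [sum_eS (n := n) (α := Bool), choi_rel ℰ ψ, Finset.mul_sum]
  rw [sum_rot3]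
  refine Finset.sum_congr rfl fun r _ => ?_
  simp only [sliceT]; rw [Finset.mul_sum]
  refine Finset.sum_congr rfl fun s _ => ?_
  rw [Finset.mul_sum]
  exact Finset.sum_congr rfl fun t _ => by ring

lemma traceB (p : Fin (n + 1) → Fin 4) (q : Fin a → Fin 4) :
    (pauliTensor (jP p q) * choiOfChannel (fun σ => ℰ σ)).trace =
      ∑ r : (Fin a → Bool) × (Fin a → Bool),
        pauliTensor q r.1 r.2 * sliceT ℰ p (r.2, r.1) := by
  classical
  rw [trace_formula, sum_eB]
  simp_rw [sum_eB (n := n) (a := a) (α := Bool), pauliTensor_eB]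
  -- flatten both sides to a single sum over a product type and compare via an equiv
  rw [← sum_nest4 (fun (s : (Fin n → Bool) × Bool) (y : Fin a → Bool)
      (t : (Fin n → Bool) × Bool) (y' : Fin a → Bool) =>
    pauliTensor p (eS s) (eS t) * pauliTensor q y y' *
      choiOfChannel (fun σ => ℰ σ) (eB t y') (eB s y))]
  have hrhs : ∑ r : (Fin a → Bool) × (Fin a → Bool),
      pauliTensor q r.1 r.2 * sliceT ℰ p (r.2, r.1) =
      ∑ z : ((Fin a → Bool) × (Fin a → Bool)) ×
          (((Fin n → Bool) × Bool) × ((Fin n → Bool) × Bool)),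
        pauliTensor q z.1.1 z.1.2 *
          (pauliTensor p (eS z.2.1) (eS z.2.2) *
            choiOfChannel (fun σ => ℰ σ) (eB z.2.2 z.1.2) (eB z.2.1 z.1.1)) := by
    rw [sum_nest2 (fun (r : (Fin a → Bool) × (Fin a → Bool))
        (st : ((Fin n → Bool) × Bool) × ((Fin n → Bool) × Bool)) =>
      pauliTensor q r.1 r.2 * (pauliTensor p (eS st.1) (eS st.2) *
        choiOfChannel (fun σ => ℰ σ) (eB st.2 r.2) (eB st.1 r.1)))]
    refine Finset.sum_congr rfl fun r _ => ?_
    rw [sum_nest2 (fun (s t : (Fin n → Bool) × Bool) =>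
      pauliTensor q r.1 r.2 * (pauliTensor p (eS s) (eS t) *
        choiOfChannel (fun σ => ℰ σ) (eB t r.2) (eB s r.1)))]
    simp only [sliceT]
    rw [Finset.mul_sum]
    refine Finset.sum_congr rfl fun s _ => ?_
    rw [Finset.mul_sum]
  rw [hrhs]
  refine Fintype.sum_equiv
    ((Equiv.prodProdProdComm ((Fin n → Bool) × Bool) (Fin a → Bool)
        ((Fin n → Bool) × Bool) (Fin a → Bool)).trans
      (Equiv.prodComm _ _)) _ _ fun z => ?_
  obtain ⟨⟨s, y⟩, ⟨t, y'⟩⟩ := z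
  simp only [Equiv.trans_apply, Equiv.prodProdProdComm_apply, Equiv.prodComm_apply,
    Prod.swap_prod_mk]
  ring

/-- `s(q) = Σ_{u,v} ψ(u,v)·Q(u,v)`. -/
def sCoeff (q : Fin a → Fin 4) : ℂ :=
  ∑ r : (Fin a → Bool) × (Fin a → Bool), ψ r.1 r.2 * pauliTensor q r.1 r.2

lemma sum_sCoeff_mul (y y' : Fin a → Bool) :
    ∑ q : Fin a → Fin 4, sCoeff ψ q * pauliTensor q y y' = 2 ^ a * ψ y' y := by
  simp_rw [sCoeff, Finset.sum_mul, mul_assoc]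
  rw [Finset.sum_comm]
  have h : ∀ r : (Fin a → Bool) × (Fin a → Bool),
      ∑ q : Fin a → Fin 4, ψ r.1 r.2 * (pauliTensor q r.1 r.2 * pauliTensor q y y') =
        ψ r.1 r.2 * if r.1 = y' ∧ r.2 = y then (2 : ℂ) ^ a else 0 := by
    intro r
    rw [← Finset.mul_sum, pauli_complete]
  simp_rw [h]
  rw [Finset.sum_eq_single ((y', y) : (Fin a → Bool) × (Fin a → Bool))]
  · simp [mul_comm]
  · rintro ⟨u, v⟩ _ hne
    rw [if_neg, mul_zero]
    rintro ⟨hu, hv⟩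
    exact hne (Prod.ext hu hv)
  · intro habs; exact absurd (Finset.mem_univ _) habs

lemma sCoeff_parseval :
    ∑ q : Fin a → Fin 4, ‖sCoeff ψ q‖ ^ 2 = 2 ^ a * frobSq ψ := by
  have key : ∑ q : Fin a → Fin 4, sCoeff ψ q * (starRingEnd ℂ) (sCoeff ψ q) =
      (2 : ℂ) ^ a * ∑ r : (Fin a → Bool) × (Fin a → Bool),
        ψ r.1 r.2 * (starRingEnd ℂ) (ψ r.1 r.2) := by
    have hconj : ∀ q : Fin a → Fin 4, (starRingEnd ℂ) (sCoeff ψ q) =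
        ∑ r : (Fin a → Bool) × (Fin a → Bool),
          (starRingEnd ℂ) (ψ r.1 r.2) * pauliTensor q r.2 r.1 := by
      intro q
      rw [sCoeff, map_sum]
      exact Finset.sum_congr rfl fun r _ => by rw [map_mul, pauli_conj]
    simp_rw [hconj, sCoeff, Finset.sum_mul_sum]
    rw [← sum_rot3]
    have hinner : ∀ r : (Fin a → Bool) × (Fin a → Bool),
        (∑ r' : (Fin a → Bool) × (Fin a → Bool), ∑ q : Fin a → Fin 4,
          ψ r.1 r.2 * pauliTensor q r.1 r.2 *
            ((starRingEnd ℂ) (ψ r'.1 r'.2) * pauliTensor q r'.2 r'.1)) =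
        ψ r.1 r.2 * (starRingEnd ℂ) (ψ r.1 r.2) * 2 ^ a := by
      intro r
      have h2 : ∀ r' : (Fin a → Bool) × (Fin a → Bool),
          ∑ q : Fin a → Fin 4, ψ r.1 r.2 * pauliTensor q r.1 r.2 *
            ((starRingEnd ℂ) (ψ r'.1 r'.2) * pauliTensor q r'.2 r'.1) =
          ψ r.1 r.2 * (starRingEnd ℂ) (ψ r'.1 r'.2) *
            if r.1 = r'.1 ∧ r.2 = r'.2 then (2 : ℂ) ^ a else 0 := by
        intro r'
        rw [← pauli_complete r.1 r.2 r'.2 r'.1, Finset.mul_sum]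
        exact Finset.sum_congr rfl fun q _ => by ring
      simp_rw [h2]
      rw [Finset.sum_eq_single r]
      · simp
      · rintro ⟨u, v⟩ _ hne
        rw [if_neg, mul_zero]
        rintro ⟨hu, hv⟩
        exact hne (Prod.ext hu.symm hv.symm)
      · intro habs; exact absurd (Finset.mem_univ _) habs
    calc ∑ r : (Fin a → Bool) × (Fin a → Bool),
          ∑ r' : (Fin a → Bool) × (Fin a → Bool), ∑ q : Fin a → Fin 4,
            ψ r.1 r.2 * pauliTensor q r.1 r.2 *
              ((starRingEnd ℂ) (ψ r'.1 r'.2) * pauliTensor q r'.2 r'.1)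
        = ∑ r : (Fin a → Bool) × (Fin a → Bool),
            ψ r.1 r.2 * (starRingEnd ℂ) (ψ r.1 r.2) * 2 ^ a :=
          Finset.sum_congr rfl fun r _ => hinner r
      _ = (2 : ℂ) ^ a * ∑ r : (Fin a → Bool) × (Fin a → Bool),
            ψ r.1 r.2 * (starRingEnd ℂ) (ψ r.1 r.2) := by
          rw [← Finset.sum_mul, mul_comm]
  have cast1 : ((∑ q : Fin a → Fin 4, ‖sCoeff ψ q‖ ^ 2 : ℝ) : ℂ) =
      ∑ q : Fin a → Fin 4, sCoeff ψ q * (starRingEnd ℂ) (sCoeff ψ q) := by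
    push_cast
    refine Finset.sum_congr rfl fun q _ => ?_
    rw [← Complex.ofReal_pow, Complex.sq_norm, ← Complex.mul_conj]
  have cast2 : ((2 ^ a * frobSq ψ : ℝ) : ℂ) =
      (2 : ℂ) ^ a * ∑ r : (Fin a → Bool) × (Fin a → Bool),
        ψ r.1 r.2 * (starRingEnd ℂ) (ψ r.1 r.2) := by
    rw [frobSq, ← sum_nest2 (fun u v => ‖ψ u v‖ ^ 2)]
    push_cast
    congr 1
    refine Finset.sum_congr rfl fun r _ => ?_
    rw [← Complex.ofReal_pow, Complex.sq_norm, ← Complex.mul_conj]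
  exact_mod_cast cast1.trans (key.trans cast2.symm)

/-- The key identity: the Pauli coefficients of the restricted Choi matrix are
`ψ`-weighted combinations of the Pauli coefficients of the full Choi matrix. -/
lemma coeff_rel (p : Fin (n + 1) → Fin 4) :
    pauliCoeff (choiOfChannel fun ρ => ℰ (tensorNA ρ ψ)) p =
      ∑ q : Fin a → Fin 4,
        sCoeff ψ q * pauliCoeff (choiOfChannel fun σ => ℰ σ) (jP p q) := by
  have hpow : ((2 : ℂ) ^ (n + a + 1))⁻¹ * 2 ^ a = ((2 : ℂ) ^ (n + 1))⁻¹ := by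
    rw [show n + a + 1 = (n + 1) + a by ring, pow_add, mul_inv]
    have h2 : ((2 : ℂ) ^ a) ≠ 0 := pow_ne_zero a two_ne_zero
    field_simp
  have hR : ∀ q : Fin a → Fin 4, pauliCoeff (choiOfChannel fun σ => ℰ σ) (jP p q) =
      ∑ r : (Fin a → Bool) × (Fin a → Bool),
        ((2 : ℂ) ^ (n + a + 1))⁻¹ *
          (pauliTensor q r.1 r.2 * sliceT ℰ p (r.2, r.1)) := by
    intro q; rw [pauliCoeff, traceB ℰ p q, Finset.mul_sum]
  rw [pauliCoeff, traceA ℰ ψ p, Finset.mul_sum]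
  have hswap : ∑ r : (Fin a → Bool) × (Fin a → Bool),
      ((2 : ℂ) ^ (n + 1))⁻¹ * (ψ r.1 r.2 * sliceT ℰ p r) =
      ∑ r : (Fin a → Bool) × (Fin a → Bool),
        ((2 : ℂ) ^ (n + 1))⁻¹ * (ψ r.2 r.1 * sliceT ℰ p (r.2, r.1)) :=
    Fintype.sum_equiv (Equiv.prodComm _ _) _ _ (fun r => rfl)
  rw [hswap]
  simp_rw [hR, Finset.mul_sum]
  rw [Finset.sum_comm]
  refine Finset.sum_congr rfl fun r _ => ?_
  calc ((2 : ℂ) ^ (n + 1))⁻¹ * (ψ r.2 r.1 * sliceT ℰ p (r.2, r.1))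
      = (∑ q : Fin a → Fin 4, sCoeff ψ q * pauliTensor q r.1 r.2) *
          (((2 : ℂ) ^ (n + a + 1))⁻¹ * sliceT ℰ p (r.2, r.1)) := by
        rw [sum_sCoeff_mul ψ r.1 r.2, ← hpow]; ring
    _ = ∑ q : Fin a → Fin 4, sCoeff ψ q *
          (((2 : ℂ) ^ (n + a + 1))⁻¹ *
            (pauliTensor q r.1 r.2 * sliceT ℰ p (r.2, r.1))) := by
        rw [Finset.sum_mul]
        exact Finset.sum_congr rfl fun q _ => by ring

lemma frobSq_nonneg {α : Type*} [Fintype α] (A : Matrix α α ℂ) : 0 ≤ frobSq A := by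
  refine Finset.sum_nonneg fun x _ => Finset.sum_nonneg fun y _ => ?_
  positivity

lemma choi_step2 {n a : ℕ} (k : ℕ)
    (M : Matrix (Fin (n + a + 1) → Bool) (Fin (n + a + 1) → Bool) ℂ) :
    ∑ t : (Fin (n + 1) → Fin 4) × (Fin a → Fin 4),
        (if k < pauliDeg (jP t.1 t.2) then
          ‖pauliCoeff M (jP t.1 t.2)‖ ^ 2 else 0) =
    ∑ Q ∈ Finset.univ.map embJP,
        (if k < pauliDeg Q then ‖pauliCoeff M Q‖ ^ 2 else 0) := by
  rw [Finset.sum_map]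
  simp only [embJP, Function.Embedding.coeFn_mk]
  rfl

lemma sum_jP_le {n a : ℕ} (k : ℕ)
    (M : Matrix (Fin (n + a + 1) → Bool) (Fin (n + a + 1) → Bool) ℂ) :
    ∑ p : Fin (n + 1) → Fin 4, ∑ q : Fin a → Fin 4,
        (if k < pauliDeg (jP p q) then ‖pauliCoeff M (jP p q)‖ ^ 2 else 0) ≤
      weightAbove k M := by
  rw [weightAbove]
  calc ∑ p : Fin (n + 1) → Fin 4, ∑ q : Fin a → Fin 4,
        (if k < pauliDeg (jP p q) then ‖pauliCoeff M (jP p q)‖ ^ 2 else 0)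
      = ∑ t : (Fin (n + 1) → Fin 4) × (Fin a → Fin 4),
          (if k < pauliDeg (jP t.1 t.2) then
            ‖pauliCoeff M (jP t.1 t.2)‖ ^ 2 else 0) := (sum_nest2 _).symm
    _ = ∑ Q ∈ Finset.univ.map embJP,
          (if k < pauliDeg Q then ‖pauliCoeff M Q‖ ^ 2 else 0) := choi_step2 k M
    _ ≤ ∑ Q : Fin (n + a + 1) → Fin 4,
          (if k < pauliDeg Q then ‖pauliCoeff M Q‖ ^ 2 else 0) := by
        refine Finset.sum_le_sum_of_subset_of_nonneg (Finset.subset_univ _) fun Q _ _ => ?_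
        split_ifs
        · positivity
        · exact le_rfl

end WGAux

/-- Fixing `a` auxiliary qubits to an arbitrary state `ψ` blows up the
Pauli weight above any degree by at most a factor `2^a·‖ψ‖_F²`. -/
theorem weight_general_aux (n a : ℕ)
    (ℰ : Matrix (Fin (n + a) → Bool) (Fin (n + a) → Bool) ℂ →ₗ[ℂ] Matrix Bool Bool ℂ)
    (ψ : Matrix (Fin a → Bool) (Fin a → Bool) ℂ)
    (hψ : ψ.PosSemidef) (hψtr : ψ.trace = 1) :
    ∀ k : ℕ, k ≤ n + 1 →
      weightAbove k (choiOfChannel fun ρ => ℰ (tensorNA ρ ψ)) ≤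
        2 ^ a * frobSq ψ * weightAbove k (choiOfChannel fun σ => ℰ σ) := by
  intro k _
  classical
  have hconst : (0 : ℝ) ≤ 2 ^ a * frobSq ψ :=
    mul_nonneg (by positivity) (frobSq_nonneg ψ)
  have hCS : ∀ p : Fin (n + 1) → Fin 4,
      ‖pauliCoeff (choiOfChannel fun ρ => ℰ (tensorNA ρ ψ)) p‖ ^ 2 ≤
        2 ^ a * frobSq ψ * ∑ q : Fin a → Fin 4,
          ‖pauliCoeff (choiOfChannel fun σ => ℰ σ) (jP p q)‖ ^ 2 := by
    intro p
    rw [coeff_rel ℰ ψ p]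
    have hle : ‖∑ q : Fin a → Fin 4,
        sCoeff ψ q * pauliCoeff (choiOfChannel fun σ => ℰ σ) (jP p q)‖ ≤
        ∑ q : Fin a → Fin 4, ‖sCoeff ψ q‖ *
          ‖pauliCoeff (choiOfChannel fun σ => ℰ σ) (jP p q)‖ := by
      refine le_trans (norm_sum_le _ _) (le_of_eq ?_)
      exact Finset.sum_congr rfl fun q _ => norm_mul _ _
    calc ‖∑ q : Fin a → Fin 4,
          sCoeff ψ q * pauliCoeff (choiOfChannel fun σ => ℰ σ) (jP p q)‖ ^ 2
        ≤ (∑ q : Fin a → Fin 4, ‖sCoeff ψ q‖ *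
            ‖pauliCoeff (choiOfChannel fun σ => ℰ σ) (jP p q)‖) ^ 2 :=
          pow_le_pow_left₀ (norm_nonneg _) hle 2
      _ ≤ (∑ q : Fin a → Fin 4, ‖sCoeff ψ q‖ ^ 2) *
            ∑ q : Fin a → Fin 4,
              ‖pauliCoeff (choiOfChannel fun σ => ℰ σ) (jP p q)‖ ^ 2 :=
          Finset.sum_mul_sq_le_sq_mul_sq _ _ _
      _ = _ := by rw [sCoeff_parseval]
  calc weightAbove k (choiOfChannel fun ρ => ℰ (tensorNA ρ ψ))
      ≤ ∑ p : Fin (n + 1) → Fin 4, if k < pauliDeg p then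
          2 ^ a * frobSq ψ * ∑ q : Fin a → Fin 4,
            ‖pauliCoeff (choiOfChannel fun σ => ℰ σ) (jP p q)‖ ^ 2 else 0 := by
        rw [weightAbove]
        refine Finset.sum_le_sum fun p _ => ?_
        by_cases h : k < pauliDeg p
        · rw [if_pos h, if_pos h]; exact hCS p
        · rw [if_neg h, if_neg h]
    _ = 2 ^ a * frobSq ψ * ∑ p : Fin (n + 1) → Fin 4, ∑ q : Fin a → Fin 4,
          (if k < pauliDeg p then
            ‖pauliCoeff (choiOfChannel fun σ => ℰ σ) (jP p q)‖ ^ 2 else 0) := by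
        rw [Finset.mul_sum]
        refine Finset.sum_congr rfl fun p _ => ?_
        by_cases h : k < pauliDeg p
        · rw [if_pos h, Finset.mul_sum, Finset.mul_sum]
          exact Finset.sum_congr rfl fun q _ => by rw [if_pos h]
        · rw [if_neg h]; simp [h]
    _ ≤ 2 ^ a * frobSq ψ * ∑ p : Fin (n + 1) → Fin 4, ∑ q : Fin a → Fin 4,
          (if k < pauliDeg (jP p q) then
            ‖pauliCoeff (choiOfChannel fun σ => ℰ σ) (jP p q)‖ ^ 2 else 0) := by
        refine mul_le_mul_of_nonneg_left
          (Finset.sum_le_sum fun p _ => Finset.sum_le_sum fun q _ => ?_) hconst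
        by_cases h : k < pauliDeg p
        · rw [if_pos h, if_pos (lt_of_lt_of_le h (pauliDeg_le_jP p q))]
        · rw [if_neg h]
          split_ifs with h2
          · positivity
          · exact le_rfl
    _ ≤ 2 ^ a * frobSq ψ * weightAbove k (choiOfChannel fun σ => ℰ σ) :=
        mul_le_mul_of_nonneg_left (sum_jP_le k _) hconst
end
end
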